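/- In the tautology-reduction profile, for every completion T, the set of winners of T (candidates of maximum score under r) is exactly the set of literals selected by T; that is, for each i the winner among {x_i, ¬x_i} is precisely the one ranked higher by the completion of voter v_i, and x₀ is never a winner. -/

import Mathlib

/-- The candidate set `C = {x₀} ∪ {x_i, ¬x_i : 1 ≤ i ≤ ℓ}`:
`none` is the special candidate `x₀`, and `some (i, true)` / `some (i, false)`
are the literals `x_i` / `¬x_i`.  Thus `|C| = m = 2ℓ+1`. -/
abbrev Cand (ℓ : ℕ) := Option (Fin ℓ × Bool)

/-- The 0-based index of candidate `c` in the fixed enumeration `oth i` of the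
`m − 2` candidates other than `x_i, ¬x_i` (the list `c₁,…,c_{m−2}`). -/
noncomputable def othIdx {ℓ : ℕ} (oth : Fin ℓ → Fin (2 * ℓ - 1) → Cand ℓ)
    (i : Fin ℓ) (c : Cand ℓ) : ℕ :=
  if h : ∃ q, oth i q = c then (h.choose : ℕ) else 0

/-- The (1-based) position of candidate `c` in the base linear order
`c^i = (c₁,…,c_{d−1}, x_i, ¬x_i, c_d,…,c_{m−2})`. -/
noncomputable def viBasePos {ℓ : ℕ} (oth : Fin ℓ → Fin (2 * ℓ - 1) → Cand ℓ)
    (d : ℕ) (i : Fin ℓ) (c : Cand ℓ) : ℕ :=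
  if c = some (i, true) then d
  else if c = some (i, false) then d + 1
  else if othIdx oth i c + 1 < d then othIdx oth i c + 1 else othIdx oth i c + 3

/-- The (1-based) position of candidate `c` in the linear order of voter `v_i^j`
(for `j ∈ {1,…,m−3}`): the candidates `c₁,…,c_{m−2}` are shifted cyclically `j`
positions to the left, `x_i` is at position `d` and `¬x_i` at `d+1` when `j` is odd,
and they are swapped when `j` is even. -/
noncomputable def vijPos {ℓ : ℕ} (oth : Fin ℓ → Fin (2 * ℓ - 1) → Cand ℓ)
    (d : ℕ) (i : Fin ℓ) (j : ℕ) (c : Cand ℓ) : ℕ :=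
  if c = some (i, true) then (if j % 2 = 1 then d else d + 1)
  else if c = some (i, false) then (if j % 2 = 1 then d + 1 else d)
  else
    let p := (othIdx oth i c + (2 * ℓ - 1) - j) % (2 * ℓ - 1) + 1
    if p < d then p else p + 2

/-- The (1-based) position of candidate `c` in the linear order of voter `u_j`
(for `j ∈ {1,…,m−1}`): the literals `(c″₁,…,c″_{m−1}) = (x₁,¬x₁,…,x_ℓ,¬x_ℓ)`
shifted cyclically `j` positions to the left, followed by `x₀` at position `m`. -/
def uPos (ℓ : ℕ) (j : ℕ) (c : Cand ℓ) : ℕ :=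
  match c with
  | none => 2 * ℓ + 1
  | some (i, b) => ((2 * (i : ℕ) + (if b then 0 else 1)) + 2 * ℓ - j) % (2 * ℓ) + 1

/-- `pos` is (the position function of) a linear order on the `m = 2ℓ+1` candidates:
it is injective with values in `{1,…,m}`. -/
def IsPosOrder (ℓ : ℕ) (pos : Cand ℓ → ℕ) : Prop :=
  Function.Injective pos ∧ ∀ c, 1 ≤ pos c ∧ pos c ≤ 2 * ℓ + 1

/-- `Tv` is a completion of the tautology-reduction profile: `Tv i` is a linear order
extending the partial order of voter `v_i`, i.e. the order `c^i` with (only) the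
comparison between `x_i` and `¬x_i` deleted.  (The orders of the voters `v_i^j` and
`u_j` are already total, so a completion is determined by the `Tv i`.) -/
def IsProfileCompletion {ℓ : ℕ} (oth : Fin ℓ → Fin (2 * ℓ - 1) → Cand ℓ)
    (d : ℕ) (Tv : Fin ℓ → Cand ℓ → ℕ) : Prop :=
  ∀ i, IsPosOrder ℓ (Tv i) ∧
    ∀ a b, viBasePos oth d i a < viBasePos oth d i b →
      ¬(a = some (i, true) ∧ b = some (i, false)) → Tv i a < Tv i b

/-- The score `s(T,c)` of candidate `c` in the completion given by `Tv`: the sum over all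
`n = ℓ(m−2)+(m−1)` voters (the `v_i`, the `v_i^j` for `j ∈ {1,…,m−3}`, and the `u_j` for
`j ∈ {1,…,m−1}`) of `r` applied to the position of `c`. -/
noncomputable def score {ℓ : ℕ} (r : ℕ → ℕ) (oth : Fin ℓ → Fin (2 * ℓ - 1) → Cand ℓ)
    (d : ℕ) (Tv : Fin ℓ → Cand ℓ → ℕ) (c : Cand ℓ) : ℕ :=
  (∑ i : Fin ℓ, r (Tv i c)) +
  (∑ i : Fin ℓ, ∑ j ∈ Finset.Icc 1 (2 * ℓ - 2), r (vijPos oth d i j c)) +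
  (∑ j ∈ Finset.Icc 1 (2 * ℓ), r (uPos ℓ j c))

/-- The completion `Tv` selects the literal `x_i` (if `b = true`) resp. `¬x_i`
(if `b = false`): the completion of voter `v_i` places it above its negation. -/
def Selects {ℓ : ℕ} (Tv : Fin ℓ → Cand ℓ → ℕ) (i : Fin ℓ) (b : Bool) : Prop :=
  if b then Tv i (some (i, true)) < Tv i (some (i, false))
  else Tv i (some (i, false)) < Tv i (some (i, true))

/-- `c` is a winner of the completion `Tv`: it has maximum score. -/
noncomputable def IsWinner {ℓ : ℕ} (r : ℕ → ℕ) (oth : Fin ℓ → Fin (2 * ℓ - 1) → Cand ℓ)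
    (d : ℕ) (Tv : Fin ℓ → Cand ℓ → ℕ) (c : Cand ℓ) : Prop :=
  ∀ c', score r oth d Tv c' ≤ score r oth d Tv c


/-! In a completion, the order of `v_i` can only swap `x_i` and `¬x_i`, which sit at the adjacent
positions `d, d + 1` of `c^i`. Over the block of voters `v_i, v_i^1, …, v_i^{m-3}` the cyclic shifts
move every other candidate through each position except `d, d + 1` exactly once, while `x_i` and
`¬x_i` alternate between `d` and `d + 1`; the voters `u_j` move each literal through the positions
`1, …, m - 1` and keep `x₀` last. So all literals have the same score up to the term `r d` or
`r (d + 1)` contributed by `v_i`, and exactly the selected literals win; `x₀` loses because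
`r m ≤ r (d + 1) < r d`. -/

open Finset Function

section Counting

variable {ι κ : Type*} [DecidableEq κ] {s : Finset ι} {t : Finset κ} {e : ι → κ}

lemma image_eq_of_injOn_of_card_le (hmaps : ∀ a ∈ s, e a ∈ t) (hinj : Set.InjOn e s)
    (hcard : #t ≤ #s) : s.image e = t :=
  eq_of_subset_of_card_le (image_subset_iff.2 hmaps) (by rwa [card_image_of_injOn hinj])

lemma sum_comp_eq_of_injOn_of_card_le {M : Type*} [AddCommMonoid M] (hmaps : ∀ a ∈ s, e a ∈ t)
    (hinj : Set.InjOn e s) (hcard : #t ≤ #s) (g : κ → M) :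
    ∑ a ∈ s, g (e a) = ∑ b ∈ t, g b := by
  rw [← image_eq_of_injOn_of_card_le hmaps hinj hcard, sum_image hinj]

end Counting

section Rank

variable {α : Type*} [Fintype α] {f g : α → ℕ}

lemma exists_apply_eq_of_injective (hf : Injective f) (hfr : ∀ c, f c ∈ Icc 1 (Fintype.card α))
    {v : ℕ} (hv : v ∈ Icc 1 (Fintype.card α)) : ∃ c, f c = v := by
  rw [← image_eq_of_injOn_of_card_le (s := univ) (fun c _ => hfr c) hf.injOn (by simp)] at hv
  simpa using hv

lemma card_filter_comp_eq_of_injective (hf : Injective f)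
    (hfr : ∀ c, f c ∈ Icc 1 (Fintype.card α)) (p : ℕ → Prop) [DecidablePred p] :
    #{c | p (f c)} = #{k ∈ Icc 1 (Fintype.card α) | p k} := by
  simp only [card_filter]
  exact sum_comp_eq_of_injOn_of_card_le (s := univ) (fun c _ => hfr c) hf.injOn (by simp)
    (fun k => if p k then 1 else 0)

lemma apply_eq_of_lt_imp_lt (hf : Injective f) (hfr : ∀ c, f c ∈ Icc 1 (Fintype.card α))
    (hg : Injective g) (hgr : ∀ c, g c ∈ Icc 1 (Fintype.card α)) {c : α}
    (hbelow : ∀ c', g c' < g c → f c' < f c) (habove : ∀ c', g c < g c' → f c < f c') :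
    f c = g c := by
  have hle_below : #{c' | g c' < g c} ≤ #{c' | f c' < f c} :=
    card_le_card (monotone_filter_right _ fun c' _ => hbelow c')
  have hle_above : #{c' | g c < g c'} ≤ #{c' | f c < f c'} :=
    card_le_card (monotone_filter_right _ fun c' _ => habove c')
  have hcount_below : ∀ v ∈ Icc 1 (Fintype.card α),
      #{k ∈ Icc 1 (Fintype.card α) | k < v} = v - 1 := fun v hv => by
    rw [show {k ∈ Icc 1 (Fintype.card α) | k < v} = Ico 1 v by ext; simp at hv ⊢; omega]; simp
  have hcount_above : ∀ v, #{k ∈ Icc 1 (Fintype.card α) | v < k} = Fintype.card α - v := fun v => by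
    rw [show {k ∈ Icc 1 (Fintype.card α) | v < k} = Ioc v (Fintype.card α) by ext; simp; omega]
    simp
  rw [card_filter_comp_eq_of_injective hf hfr (· < f c), hcount_below _ (hfr c),
    card_filter_comp_eq_of_injective hg hgr (· < g c), hcount_below _ (hgr c)] at hle_below
  rw [card_filter_comp_eq_of_injective hf hfr (f c < ·), hcount_above,
    card_filter_comp_eq_of_injective hg hgr (g c < ·), hcount_above] at hle_above
  have := mem_Icc.1 (hfr c)
  have := mem_Icc.1 (hgr c)
  omega

end Rank

lemma add_sub_mod_eq_ite {k n j : ℕ} (hk : k < n) (hj : j ≤ n) :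
    (k + n - j) % n = if j ≤ k then k - j else k + n - j := by
  split_ifs with hjk
  · rw [show k + n - j = k - j + n by omega, Nat.add_mod_right, Nat.mod_eq_of_lt (by omega)]
  · exact Nat.mod_eq_of_lt (by omega)

lemma sum_Icc_ite_odd {M : Type*} [AddCommMonoid M] (t : ℕ) (A B : M) :
    ∑ j ∈ Icc 1 (2 * t), (if j % 2 = 1 then A else B) = t • (A + B) := by
  induction t with
  | zero => simp
  | succ t ih =>
    rw [show 2 * (t + 1) = 2 * t + 1 + 1 by ring, sum_Icc_succ_top (by omega),
      sum_Icc_succ_top (by omega), ih, if_pos (by omega), if_neg (by omega), succ_nsmul,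
      add_assoc]

lemma sum_Icc_sdiff_pair_add {M : Type*} [AddCommMonoid M] {n d : ℕ} (r : ℕ → M) (hd1 : 1 ≤ d)
    (hd2 : d ≤ n) :
    ∑ p ∈ Icc 1 (n + 1) \ {d, d + 1}, r p + (r d + r (d + 1)) = ∑ p ∈ Icc 1 n, r p + r (n + 1) := by
  rw [← sum_pair (show d ≠ d + 1 by omega), sum_sdiff (by simp [insert_subset_iff]; omega),
    sum_Icc_succ_top (by omega)]

lemma forall_le_iff_of_eq_of_lt {α : Type*} {f : α → ℕ} {P : α → Prop} {M : ℕ}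
    (hP : ∀ c, P c → f c = M) (hnP : ∀ c, ¬P c → f c < M) (hex : ∃ c, P c) (c : α) :
    (∀ c', f c' ≤ f c) ↔ P c := by
  obtain ⟨c₀, hc₀⟩ := hex
  refine ⟨fun h => by_contra fun hc => ?_, fun hc c' => ?_⟩
  · exact absurd (h c₀) (by rw [hP c₀ hc₀]; exact not_le.2 (hnP c hc))
  · rw [hP c hc]
    by_cases hc' : P c'
    exacts [(hP c' hc').le, (hnP c' hc').le]

lemma card_cand (ℓ : ℕ) : Fintype.card (Cand ℓ) = 2 * ℓ + 1 := by
  simp [Cand]; ring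

lemma IsPosOrder.mem_Icc {ℓ : ℕ} {pos : Cand ℓ → ℕ} (h : IsPosOrder ℓ pos) (c : Cand ℓ) :
    pos c ∈ Icc 1 (Fintype.card (Cand ℓ)) := by
  rw [card_cand, Finset.mem_Icc]; exact h.2 c

def skipPair (d p : ℕ) : ℕ := if p < d then p else p + 2

lemma skipPair_injective (d : ℕ) : Injective (skipPair d) := by
  intro p p' h
  unfold skipPair at h
  split_ifs at h <;> omega

lemma skipPair_ne_left (d p : ℕ) : skipPair d p ≠ d := by
  unfold skipPair; split_ifs <;> omega

lemma skipPair_ne_right (d p : ℕ) : skipPair d p ≠ d + 1 := by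
  unfold skipPair; split_ifs <;> omega

lemma skipPair_mem_Icc {d n p : ℕ} (hp : p ∈ Icc 1 n) :
    skipPair d p ∈ Icc 1 (n + 2) := by
  rw [Finset.mem_Icc] at hp ⊢
  unfold skipPair; split_ifs <;> omega

lemma viBasePos_literal {ℓ : ℕ} (oth : Fin ℓ → Fin (2 * ℓ - 1) → Cand ℓ) (d : ℕ) (i : Fin ℓ)
    (b : Bool) : viBasePos oth d i (some (i, b)) = if b then d else d + 1 := by
  cases b <;> simp [viBasePos]

section Others

variable {ℓ : ℕ} {oth : Fin ℓ → Fin (2 * ℓ - 1) → Cand ℓ} {i : Fin ℓ}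
  (hinj : Injective (oth i)) (hne : ∀ q, oth i q ≠ some (i, true) ∧ oth i q ≠ some (i, false))
include hinj

lemma othIdx_oth (q : Fin (2 * ℓ - 1)) : othIdx oth i (oth i q) = q := by
  have h : ∃ q', oth i q' = oth i q := ⟨q, rfl⟩
  rw [othIdx, dif_pos h, hinj h.choose_spec]

include hne

lemma image_oth : univ.image (oth i) = univ \ {some (i, true), some (i, false)} := by
  refine image_eq_of_injOn_of_card_le (fun q _ => ?_) hinj.injOn ?_
  · simpa using hne q
  · rw [card_sdiff_of_subset (subset_univ _), card_univ, card_cand, card_pair (by simp)]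
    simp

lemma cand_cases (c : Cand ℓ) :
    c = some (i, true) ∨ c = some (i, false) ∨ ∃ q, oth i q = c := by
  by_contra! h
  have : c ∈ univ.image (oth i) := by rw [image_oth hinj hne]; simp [h.1, h.2.1]
  obtain ⟨q, -, hq⟩ := mem_image.1 this
  exact h.2.2 q hq

lemma viBasePos_oth (d : ℕ) (q : Fin (2 * ℓ - 1)) :
    viBasePos oth d i (oth i q) = skipPair d (q + 1) := by
  simp [viBasePos, skipPair, hne, othIdx_oth hinj]

lemma vijPos_oth (d j : ℕ) (q : Fin (2 * ℓ - 1)) :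
    vijPos oth d i j (oth i q) = skipPair d ((q + (2 * ℓ - 1) - j) % (2 * ℓ - 1) + 1) := by
  simp [vijPos, skipPair, hne, othIdx_oth hinj]

lemma vijPos_zero_oth (d : ℕ) (q : Fin (2 * ℓ - 1)) :
    vijPos oth d i 0 (oth i q) = viBasePos oth d i (oth i q) := by
  rw [vijPos_oth hinj hne, viBasePos_oth hinj hne, Nat.sub_zero, Nat.add_mod_right,
    Nat.mod_eq_of_lt q.isLt]

lemma isPosOrder_viBasePos {d : ℕ} (hd1 : 1 ≤ d) (hd2 : d ≤ 2 * ℓ) :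
    IsPosOrder ℓ (viBasePos oth d i) := by
  refine ⟨fun a b hab => ?_, fun c => ?_⟩
  · rcases cand_cases hinj hne a with rfl | rfl | ⟨qa, rfl⟩ <;>
    rcases cand_cases hinj hne b with rfl | rfl | ⟨qb, rfl⟩ <;>
    simp only [viBasePos_literal, viBasePos_oth hinj hne, if_true, Bool.false_eq_true,
      if_false] at hab
    all_goals first
      | rfl
      | omega
      | exact absurd hab (skipPair_ne_left _ _)
      | exact absurd hab (skipPair_ne_right _ _)
      | exact absurd hab.symm (skipPair_ne_left _ _)
      | exact absurd hab.symm (skipPair_ne_right _ _)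
      | exact congrArg (oth i) (Fin.ext (by have := skipPair_injective d hab; omega))
  · rw [← Finset.mem_Icc]
    rcases cand_cases hinj hne c with rfl | rfl | ⟨q, rfl⟩
    · simp only [viBasePos_literal, if_true, Finset.mem_Icc]; omega
    · simp only [viBasePos_literal, Bool.false_eq_true, if_false, Finset.mem_Icc]; omega
    · rw [viBasePos_oth hinj hne, show 2 * ℓ + 1 = 2 * ℓ - 1 + 2 by omega]
      exact skipPair_mem_Icc (by simp)

end Others

namespace IsProfileCompletion

variable {ℓ d : ℕ} {oth : Fin ℓ → Fin (2 * ℓ - 1) → Cand ℓ} {Tv : Fin ℓ → Cand ℓ → ℕ}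
  (hTv : IsProfileCompletion oth d Tv) {i : Fin ℓ}
include hTv

lemma selects_or : Selects Tv i true ∨ Selects Tv i false := by
  simp only [Selects, if_true, Bool.false_eq_true, if_false]
  exact lt_or_gt_of_ne fun h => by simpa using (hTv i).1.1 h

variable (hinj : Injective (oth i))
  (hne : ∀ q, oth i q ≠ some (i, true) ∧ oth i q ≠ some (i, false)) (hd1 : 1 ≤ d) (hd2 : d ≤ 2 * ℓ)
include hinj hne hd1 hd2

lemma apply_oth (q : Fin (2 * ℓ - 1)) : Tv i (oth i q) = viBasePos oth d i (oth i q) := by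
  have hg := isPosOrder_viBasePos hinj hne hd1 hd2
  exact apply_eq_of_lt_imp_lt (hTv i).1.1 (hTv i).1.mem_Icc hg.1 hg.mem_Icc
    (fun c h => (hTv i).2 c _ h fun h' => (hne q).2 h'.2)
    (fun c h => (hTv i).2 _ c h fun h' => (hne q).1 h'.1)

lemma apply_literal_eq_or (b : Bool) : Tv i (some (i, b)) = d ∨ Tv i (some (i, b)) = d + 1 := by
  have hg := isPosOrder_viBasePos hinj hne hd1 hd2
  obtain ⟨c, hc⟩ := exists_apply_eq_of_injective hg.1 hg.mem_Icc ((hTv i).1.mem_Icc (some (i, b)))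
  rcases cand_cases hinj hne c with rfl | rfl | ⟨q, rfl⟩
  · simp [← hc, viBasePos_literal]
  · simp [← hc, viBasePos_literal]
  · rw [← apply_oth hTv hinj hne hd1 hd2] at hc
    have := (hTv i).1.1 hc
    cases b
    exacts [absurd this (hne q).2, absurd this (hne q).1]

lemma selects_iff (b : Bool) : Selects Tv i b ↔ Tv i (some (i, b)) = d := by
  have ht := apply_literal_eq_or hTv hinj hne hd1 hd2 true
  have hf := apply_literal_eq_or hTv hinj hne hd1 hd2 false
  have hne' : Tv i (some (i, true)) ≠ Tv i (some (i, false)) := fun h => by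
    simpa using (hTv i).1.1 h
  cases b <;> simp only [Selects, if_true, Bool.false_eq_true, if_false] <;> omega

lemma apply_literal_of_not_selects {b : Bool} (hb : ¬Selects Tv i b) :
    Tv i (some (i, b)) = d + 1 :=
  (apply_literal_eq_or hTv hinj hne hd1 hd2 b).resolve_left
    (mt (selects_iff hTv hinj hne hd1 hd2 b).2 hb)

end IsProfileCompletion

noncomputable def blockScore {ℓ : ℕ} (r : ℕ → ℕ) (oth : Fin ℓ → Fin (2 * ℓ - 1) → Cand ℓ) (d : ℕ)
    (Tv : Fin ℓ → Cand ℓ → ℕ) (i : Fin ℓ) (c : Cand ℓ) : ℕ :=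
  r (Tv i c) + ∑ j ∈ Icc 1 (2 * ℓ - 2), r (vijPos oth d i j c)

def uScore (r : ℕ → ℕ) (ℓ : ℕ) (c : Cand ℓ) : ℕ :=
  ∑ j ∈ Icc 1 (2 * ℓ), r (uPos ℓ j c)

section BlockScores

variable {ℓ d : ℕ} {r : ℕ → ℕ} {oth : Fin ℓ → Fin (2 * ℓ - 1) → Cand ℓ} {Tv : Fin ℓ → Cand ℓ → ℕ}

lemma score_eq_sum_blockScore (c : Cand ℓ) :
    score r oth d Tv c = ∑ i, blockScore r oth d Tv i c + uScore r ℓ c := by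
  simp only [score, blockScore, uScore, sum_add_distrib]

lemma blockScore_literal_self (i : Fin ℓ) (b : Bool) :
    blockScore r oth d Tv i (some (i, b)) =
      r (Tv i (some (i, b))) + (ℓ - 1) * (r d + r (d + 1)) := by
  rw [blockScore, show 2 * ℓ - 2 = 2 * (ℓ - 1) by omega]
  cases b
  · simp only [vijPos, Option.some.injEq, Prod.mk.injEq, Bool.false_eq_true, and_false, if_false,
      if_true, apply_ite r, sum_Icc_ite_odd, smul_eq_mul, add_comm (r (d + 1))]
  · simp only [vijPos, if_true, apply_ite r, sum_Icc_ite_odd, smul_eq_mul]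

lemma blockScore_of_ne (hTv : IsProfileCompletion oth d Tv) {i : Fin ℓ}
    (hinj : Injective (oth i)) (hne : ∀ q, oth i q ≠ some (i, true) ∧ oth i q ≠ some (i, false))
    (hd1 : 1 ≤ d) (hd2 : d ≤ 2 * ℓ) {c : Cand ℓ} (h1 : c ≠ some (i, true))
    (h2 : c ≠ some (i, false)) :
    blockScore r oth d Tv i c = ∑ p ∈ Icc 1 (2 * ℓ + 1) \ {d, d + 1}, r p := by
  obtain ⟨q, rfl⟩ := (cand_cases hinj hne c).resolve_left h1 |>.resolve_left h2
  have hq := q.isLt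
  -- `v_i` acts as the shift `j = 0`, completing the cycle `j ∈ [0, m - 3]` of shifts
  rw [blockScore, hTv.apply_oth hinj hne hd1 hd2, ← vijPos_zero_oth hinj hne, add_comm,
    show Icc 1 (2 * ℓ - 2) = Ioc 0 (2 * ℓ - 2) from Icc_add_one_left_eq_Ioc 0 _,
    sum_Ioc_add_eq_sum_Icc (Nat.zero_le _)]
  simp only [vijPos_oth hinj hne]
  refine sum_comp_eq_of_injOn_of_card_le (fun j hj => ?_) (fun j hj j' hj' h => ?_) ?_ r
  · rw [mem_sdiff, show 2 * ℓ + 1 = 2 * ℓ - 1 + 2 by omega]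
    refine ⟨skipPair_mem_Icc ?_, by simp [skipPair_ne_left, skipPair_ne_right]⟩
    have := Nat.mod_lt (q + (2 * ℓ - 1) - j) (show 0 < 2 * ℓ - 1 by omega)
    simp only [Finset.mem_Icc]; omega
  · simp only [coe_Icc, Set.mem_Icc] at hj hj'
    have := skipPair_injective d h
    rw [add_sub_mod_eq_ite hq (by omega), add_sub_mod_eq_ite hq (by omega)] at this
    split_ifs at this <;> omega
  · rw [card_sdiff_of_subset (by simp [insert_subset_iff]; omega), card_pair (by omega)]
    simp; omega

lemma uScore_literal (i : Fin ℓ) (b : Bool) :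
    uScore r ℓ (some (i, b)) = ∑ p ∈ Icc 1 (2 * ℓ), r p := by
  have hk : 2 * (i : ℕ) + (if b then 0 else 1) < 2 * ℓ := by have := i.isLt; split_ifs <;> omega
  refine sum_comp_eq_of_injOn_of_card_le (fun j hj => ?_) (fun j hj j' hj' h => ?_) le_rfl r
  · have := Nat.mod_lt (2 * (i : ℕ) + (if b then 0 else 1) + 2 * ℓ - j) (show 0 < 2 * ℓ by omega)
    simp only [uPos, Finset.mem_Icc]; omega
  · simp only [coe_Icc, Set.mem_Icc] at hj hj'
    simp only [uPos, add_left_inj] at h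
    rw [add_sub_mod_eq_ite hk (by omega), add_sub_mod_eq_ite hk (by omega)] at h
    split_ifs at h <;> omega

lemma uScore_none : uScore r ℓ none = 2 * ℓ * r (2 * ℓ + 1) := by
  simp [uScore, uPos]

end BlockScores

section Scores

variable {ℓ d : ℕ} {r : ℕ → ℕ} {oth : Fin ℓ → Fin (2 * ℓ - 1) → Cand ℓ} {Tv : Fin ℓ → Cand ℓ → ℕ}
  (hTv : IsProfileCompletion oth d Tv) (hinj : ∀ i, Injective (oth i))
  (hne : ∀ i q, oth i q ≠ some (i, true) ∧ oth i q ≠ some (i, false))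
  (hd1 : 1 ≤ d) (hd2 : d ≤ 2 * ℓ)
include hTv hinj hne hd1 hd2

lemma score_literal (i : Fin ℓ) (b : Bool) :
    score r oth d Tv (some (i, b)) = r (Tv i (some (i, b))) + (ℓ - 1) * (r d + r (d + 1)) +
      (ℓ - 1) * ∑ p ∈ Icc 1 (2 * ℓ + 1) \ {d, d + 1}, r p + ∑ p ∈ Icc 1 (2 * ℓ), r p := by
  have hother : ∀ k ∈ univ.erase i, blockScore r oth d Tv k (some (i, b)) =
      ∑ p ∈ Icc 1 (2 * ℓ + 1) \ {d, d + 1}, r p := fun k hk =>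
    blockScore_of_ne hTv (hinj k) (hne k) hd1 hd2
      (by rintro ⟨⟩; exact ne_of_mem_erase hk rfl) (by rintro ⟨⟩; exact ne_of_mem_erase hk rfl)
  rw [score_eq_sum_blockScore, ← add_sum_erase _ _ (mem_univ i), blockScore_literal_self,
    sum_congr rfl hother, sum_const, card_erase_of_mem (mem_univ i), card_univ, Fintype.card_fin,
    smul_eq_mul, uScore_literal]

lemma score_none : score r oth d Tv none =
    ℓ * ∑ p ∈ Icc 1 (2 * ℓ + 1) \ {d, d + 1}, r p + 2 * ℓ * r (2 * ℓ + 1) := by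
  rw [score_eq_sum_blockScore, uScore_none,
    sum_congr rfl fun k _ => blockScore_of_ne hTv (hinj k) (hne k) hd1 hd2 (by simp) (by simp),
    sum_const, card_univ, Fintype.card_fin, smul_eq_mul]

end Scores

theorem winners_eq_selected_literals_general (ℓ : ℕ) (hℓ : 1 ≤ ℓ) (r : ℕ → ℕ)
    (hr_mono : ∀ p q, 1 ≤ p → p ≤ q → q ≤ 2 * ℓ + 1 → r q ≤ r p)
    (d : ℕ) (hd1 : 1 ≤ d) (hd2 : d ≤ 2 * ℓ) (hrd : r (d + 1) < r d)
    (oth : Fin ℓ → Fin (2 * ℓ - 1) → Cand ℓ)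
    (hoth_inj : ∀ i, Function.Injective (oth i))
    (hoth_ne : ∀ i q, oth i q ≠ some (i, true) ∧ oth i q ≠ some (i, false))
    (Tv : Fin ℓ → Cand ℓ → ℕ) (hTv : IsProfileCompletion oth d Tv) :
    ∀ c : Cand ℓ, IsWinner r oth d Tv c ↔
      ∃ (i : Fin ℓ) (b : Bool), c = some (i, b) ∧ Selects Tv i b := by
  have hWS := sum_Icc_sdiff_pair_add r hd1 hd2
  have hnone := score_none (r := r) hTv hoth_inj hoth_ne hd1 hd2
  have hlit := score_literal (r := r) hTv hoth_inj hoth_ne hd1 hd2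
  generalize ∑ p ∈ Icc 1 (2 * ℓ + 1) \ {d, d + 1}, r p = W at hWS hnone hlit
  generalize ∑ p ∈ Icc 1 (2 * ℓ), r p = S at hWS hlit
  have hlast : r (2 * ℓ + 1) ≤ r (d + 1) := hr_mono _ _ (by omega) (by omega) le_rfl
  refine forall_le_iff_of_eq_of_lt (M := r d + (ℓ - 1) * (r d + r (d + 1)) + (ℓ - 1) * W + S)
    ?_ ?_ ?_
  · rintro _ ⟨i, b, rfl, hb⟩
    rw [hlit, (hTv.selects_iff (hoth_inj i) (hoth_ne i) hd1 hd2 b).1 hb]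
  · rintro (_ | ⟨i, b⟩) hc
    · obtain ⟨e, rfl⟩ : ∃ e, ℓ = e + 1 := ⟨ℓ - 1, by omega⟩
      rw [hnone, Nat.add_sub_cancel]
      nlinarith [Nat.mul_le_mul_left e hlast, Nat.mul_le_mul_left e (hlast.trans hrd.le)]
    · have hb : ¬Selects Tv i b := fun hb => hc ⟨i, b, rfl, hb⟩
      rw [hlit, hTv.apply_literal_of_not_selects (hoth_inj i) (hoth_ne i) hd1 hd2 hb]
      omega
  · obtain h | h := hTv.selects_or (i := ⟨0, hℓ⟩)
    exacts [⟨_, _, _, rfl, h⟩, ⟨_, _, _, rfl, h⟩]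

/-- in the tautology-reduction profile, for every completion `T`, the set of
winners (candidates of maximum score) is exactly the set of literals selected by `T`;
in particular `x₀` is never a winner. -/
theorem winners_eq_selected_literals (ℓ : ℕ) (hℓ : 1 ≤ ℓ) (r : ℕ → ℕ)
    (hr_mono : ∀ p q, 1 ≤ p → p ≤ q → q ≤ 2 * ℓ + 1 → r q ≤ r p)
    (hr_strict : r (2 * ℓ + 1) < r 1)
    (d : ℕ) (hd1 : 1 ≤ d) (hd2 : d ≤ 2 * ℓ) (hrd : r (d + 1) < r d)
    (oth : Fin ℓ → Fin (2 * ℓ - 1) → Cand ℓ)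
    (hoth_inj : ∀ i, Function.Injective (oth i))
    (hoth_ne : ∀ i q, oth i q ≠ some (i, true) ∧ oth i q ≠ some (i, false))
    (Tv : Fin ℓ → Cand ℓ → ℕ) (hTv : IsProfileCompletion oth d Tv) :
    ∀ c : Cand ℓ, IsWinner r oth d Tv c ↔
      ∃ (i : Fin ℓ) (b : Bool), c = some (i, b) ∧ Selects Tv i b :=
  winners_eq_selected_literals_general ℓ hℓ r hr_mono d hd1 hd2 hrd oth hoth_inj hoth_ne Tv hTv
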